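/- For any two-sender unicast index coding problem with side-information digraph D and message partition P, the optimal linear broadcast rate satisfies β_t^l(D,P) ≤ β_t^l(D_1) + β_t^l(D_2) + β_t^l(D_{1,2}), where D_1, D_2, D_{1,2} are the subdigraphs induced by the messages exclusively at sender 1, exclusively at sender 2, and at both senders respectively. -/

import Mathlib

/-- `Decodes D E` : every receiver `i` can recover its `t`-bit message `x i` from the
codeword `E x` and its side information (the messages of its out-neighbours in the
side-information digraph `D`). -/
def Decodes {V : Type} {t p : ℕ} (D : V → V → Prop)
    (E : (V → Fin t → ZMod 2) → (Fin p → ZMod 2)) : Prop :=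
  ∀ (i : V) (x y : V → Fin t → ZMod 2),
    E x = E y → (∀ j, D i j → x j = y j) → x i = y i

/-- The set of broadcast rates `p / t` achievable by linear single-sender index codes for
the side-information digraph `D` with `t`-bit messages. -/
def linRates (V : Type) (t : ℕ) (D : V → V → Prop) : Set ℝ :=
  { r | ∃ (p : ℕ) (E : (V → Fin t → ZMod 2) →ₗ[ZMod 2] (Fin p → ZMod 2)),
      Decodes D ⇑E ∧ r = (p : ℝ) / t }

/-- Optimal linear broadcast rate of the single-sender problem with digraph `D`. -/
noncomputable def beta1 (V : Type) (t : ℕ) (D : V → V → Prop) : ℝ :=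
  sInf (linRates V t D)

/-- `OnlyUses M E` : the encoder `E` depends only on the messages indexed by `M`. -/
def OnlyUses {V : Type} {t p : ℕ} (M : Set V)
    (E : (V → Fin t → ZMod 2) → (Fin p → ZMod 2)) : Prop :=
  ∀ x y : V → Fin t → ZMod 2, (∀ j ∈ M, x j = y j) → E x = E y

/-- Two-sender decodability: every receiver recovers its message from both transmitted
sub-codewords and its side information. -/
def Decodes2 {V : Type} {t p1 p2 : ℕ} (D : V → V → Prop)
    (E1 : (V → Fin t → ZMod 2) → (Fin p1 → ZMod 2))
    (E2 : (V → Fin t → ZMod 2) → (Fin p2 → ZMod 2)) : Prop :=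
  ∀ (i : V) (x y : V → Fin t → ZMod 2),
    E1 x = E1 y → E2 x = E2 y → (∀ j, D i j → x j = y j) → x i = y i

/-- Optimal linear broadcast rate `β_t^l(D, P)` of the two-sender problem: the infimum of
`(p₁ + p₂) / t` over pairs of linear encoders, where sender `s` may only use the messages
in `M s`, such that every receiver can decode. -/
noncomputable def beta2 (V : Type) (t : ℕ) (D : V → V → Prop) (M1 M2 : Set V) : ℝ :=
  sInf { r | ∃ (p1 p2 : ℕ)
      (E1 : (V → Fin t → ZMod 2) →ₗ[ZMod 2] (Fin p1 → ZMod 2))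
      (E2 : (V → Fin t → ZMod 2) →ₗ[ZMod 2] (Fin p2 → ZMod 2)),
      OnlyUses M1 ⇑E1 ∧ OnlyUses M2 ⇑E2 ∧ Decodes2 D ⇑E1 ⇑E2 ∧
      r = ((p1 : ℝ) + (p2 : ℝ)) / t }

/-!
Sender 1 broadcasts optimal linear codes for `D₁` and `D_{1,2}` one after the other and
sender 2 one for `D₂`. Every receiver lies in exactly one of the three message classes and
decodes from the matching code, so any three achievable rates of the subproblems add up to an
achievable two-sender rate, and the bound follows by taking infima. Taking infima needs the
subproblems to have codes at all: if the two-sender problem has none, its rate is `sInf ∅ = 0`;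
otherwise its two codewords, concatenated and with the messages outside a class set to zero,
form a code for that class.
-/

open Set Pointwise

section Concat

variable {R M : Type*} [Semiring R] [AddCommMonoid M] [Module R M] {p q : ℕ}

noncomputable def concatCode (E₁ : M →ₗ[R] Fin p → R) (E₂ : M →ₗ[R] Fin q → R) :
    M →ₗ[R] Fin (p + q) → R :=
  ((LinearEquiv.funCongrLeft R R finSumFinEquiv).trans
      (LinearEquiv.sumArrowLequivProdArrow _ _ R R)).symm.toLinearMap ∘ₗ E₁.prod E₂

theorem concatCode_eq_iff (E₁ : M →ₗ[R] Fin p → R) (E₂ : M →ₗ[R] Fin q → R) (x y : M) :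
    concatCode E₁ E₂ x = concatCode E₁ E₂ y ↔ E₁ x = E₁ y ∧ E₂ x = E₂ y := by
  simp only [concatCode, LinearMap.comp_apply, LinearEquiv.coe_coe, EmbeddingLike.apply_eq_iff_eq,
    LinearMap.prod_apply, Prod.ext_iff]
  rfl

end Concat

section ExtendByZero

variable {V : Type*} (R M : Type*) [Semiring R] [AddCommMonoid M] [Module R M] (A : Set V)

noncomputable def extendByZero : (A → M) →ₗ[R] V → M :=
  LinearMap.pi fun v => by
    classical
    exact if h : v ∈ A then LinearMap.proj ⟨v, h⟩ else 0

variable {R M A}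

theorem extendByZero_apply_of_mem (x : A → M) {v : V} (hv : v ∈ A) :
    extendByZero R M A x v = x ⟨v, hv⟩ := by
  simp [extendByZero, hv]

theorem extendByZero_apply_of_notMem (x : A → M) {v : V} (hv : v ∉ A) :
    extendByZero R M A x v = 0 := by
  simp [extendByZero, hv]

end ExtendByZero

def linRates2 (V : Type) (t : ℕ) (D : V → V → Prop) (M1 M2 : Set V) : Set ℝ :=
  { r | ∃ (p1 p2 : ℕ)
      (E1 : (V → Fin t → ZMod 2) →ₗ[ZMod 2] (Fin p1 → ZMod 2))
      (E2 : (V → Fin t → ZMod 2) →ₗ[ZMod 2] (Fin p2 → ZMod 2)),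
      OnlyUses M1 ⇑E1 ∧ OnlyUses M2 ⇑E2 ∧ Decodes2 D ⇑E1 ⇑E2 ∧
      r = ((p1 : ℝ) + (p2 : ℝ)) / t }

theorem beta2_eq_sInf_linRates2 (V : Type) (t : ℕ) (D : V → V → Prop) (M1 M2 : Set V) :
    beta2 V t D M1 M2 = sInf (linRates2 V t D M1 M2) :=
  rfl

theorem linRates_subset_Ici (V : Type) (t : ℕ) (D : V → V → Prop) : linRates V t D ⊆ Ici 0 := by
  rintro r ⟨p, E, -, rfl⟩
  exact mem_Ici.2 (by positivity)

theorem linRates2_subset_Ici (V : Type) (t : ℕ) (D : V → V → Prop) (M1 M2 : Set V) :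
    linRates2 V t D M1 M2 ⊆ Ici 0 := by
  rintro r ⟨p1, p2, E1, E2, -, -, -, rfl⟩
  exact mem_Ici.2 (by positivity)

theorem beta1_nonneg (V : Type) (t : ℕ) (D : V → V → Prop) : 0 ≤ beta1 V t D :=
  Real.sInf_nonneg fun _ hr => linRates_subset_Ici V t D hr

section IndexCodes

variable {V : Type} {t : ℕ} {D : V → V → Prop}

theorem Decodes2.decodes_concatCode {p1 p2 : ℕ}
    {E1 : (V → Fin t → ZMod 2) →ₗ[ZMod 2] (Fin p1 → ZMod 2)}
    {E2 : (V → Fin t → ZMod 2) →ₗ[ZMod 2] (Fin p2 → ZMod 2)} (h : Decodes2 D E1 E2) :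
    Decodes D (concatCode E1 E2) := fun i x y hxy =>
  h i x y ((concatCode_eq_iff E1 E2 x y).1 hxy).1 ((concatCode_eq_iff E1 E2 x y).1 hxy).2

theorem Decodes.comp_extendByZero {p : ℕ} {E : (V → Fin t → ZMod 2) → (Fin p → ZMod 2)}
    (h : Decodes D E) (A : Set V) :
    Decodes (fun a b : A => D a b) (E ∘ extendByZero (ZMod 2) (Fin t → ZMod 2) A) := by
  intro i x y hxy hside
  have hext : ∀ x : A → Fin t → ZMod 2, extendByZero (ZMod 2) _ A x i = x i :=
    fun x => extendByZero_apply_of_mem x i.2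
  rw [← hext x, ← hext y]
  refine h i _ _ hxy fun j hj => ?_
  by_cases hjA : j ∈ A
  · simp only [extendByZero_apply_of_mem _ hjA, hside ⟨j, hjA⟩ hj]
  · simp only [extendByZero_apply_of_notMem _ hjA]

theorem linRates_nonempty_of_linRates2_nonempty {M1 M2 : Set V}
    (h : (linRates2 V t D M1 M2).Nonempty) : (linRates V t D).Nonempty := by
  obtain ⟨-, p1, p2, E1, E2, -, -, hdec, -⟩ := h
  exact ⟨_, p1 + p2, concatCode E1 E2, hdec.decodes_concatCode, rfl⟩

theorem linRates_induce_nonempty (h : (linRates V t D).Nonempty) (A : Set V) :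
    (linRates A t fun a b => D a b).Nonempty := by
  obtain ⟨-, p, E, hdec, -⟩ := h
  exact ⟨_, p, E ∘ₗ extendByZero _ _ A, hdec.comp_extendByZero A, rfl⟩

theorem Decodes.eq_of_eq_on_restrict {A : Set V} {p : ℕ} {F : (A → Fin t → ZMod 2) → (Fin p → ZMod 2)}
    (h : Decodes (fun a b : A => D a b) F) {i : V} (hi : i ∈ A) {x y : V → Fin t → ZMod 2}
    (hF : F (fun a : A => x a) = F (fun a : A => y a)) (hside : ∀ j, D i j → x j = y j) :
    x i = y i :=
  h ⟨i, hi⟩ _ _ hF fun j => hside j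

theorem onlyUses_comp_restrict {A M : Set V} (hA : A ⊆ M) {p : ℕ}
    (F : (A → Fin t → ZMod 2) → (Fin p → ZMod 2)) :
    OnlyUses M fun x : V → Fin t → ZMod 2 => F fun a : A => x a :=
  fun _ _ hxy => congrArg F (funext fun a => hxy a (hA a.2))

theorem OnlyUses.concatCode {M : Set V} {p1 p2 : ℕ}
    {E1 : (V → Fin t → ZMod 2) →ₗ[ZMod 2] (Fin p1 → ZMod 2)}
    {E2 : (V → Fin t → ZMod 2) →ₗ[ZMod 2] (Fin p2 → ZMod 2)}
    (h1 : OnlyUses M E1) (h2 : OnlyUses M E2) : OnlyUses M (concatCode E1 E2) :=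
  fun x y hxy => (concatCode_eq_iff E1 E2 x y).2 ⟨h1 x y hxy, h2 x y hxy⟩

theorem add_add_subset_linRates2 {M1 M2 : Set V} (hcov : M1 ∪ M2 = univ) :
    linRates ↥(M1 \ M2) t (fun a b => D a.1 b.1) + linRates ↥(M2 \ M1) t (fun a b => D a.1 b.1) +
        linRates ↥(M1 ∩ M2) t (fun a b => D a.1 b.1) ⊆ linRates2 V t D M1 M2 := by
  rintro _ ⟨_, ⟨_, ⟨q1, F1, dec1, rfl⟩, _, ⟨q2, F2, dec2, rfl⟩, rfl⟩, _, ⟨q12, F12, dec12, rfl⟩, rfl⟩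
  let restrict (A : Set V) : (V → Fin t → ZMod 2) →ₗ[ZMod 2] A → Fin t → ZMod 2 :=
    LinearMap.funLeft _ _ Subtype.val
  refine ⟨q1 + q12, q2, concatCode (F1 ∘ₗ restrict _) (F12 ∘ₗ restrict _), F2 ∘ₗ restrict _,
    ?_, ?_, ?_, ?_⟩
  · exact (onlyUses_comp_restrict sdiff_subset F1).concatCode
      (onlyUses_comp_restrict inter_subset_left F12)
  · exact onlyUses_comp_restrict sdiff_subset F2
  · intro i x y h1 h2 hside
    rw [concatCode_eq_iff] at h1
    have hi : i ∈ M1 ∪ M2 := hcov ▸ mem_univ i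
    by_cases hi1 : i ∈ M1 <;> by_cases hi2 : i ∈ M2
    · exact dec12.eq_of_eq_on_restrict ⟨hi1, hi2⟩ h1.2 hside
    · exact dec1.eq_of_eq_on_restrict ⟨hi1, hi2⟩ h1.1 hside
    · exact dec2.eq_of_eq_on_restrict ⟨hi2, hi1⟩ h2 hside
    · exact (hi.elim hi1 hi2).elim
  · push_cast
    ring

end IndexCodes

theorem two_sender_le_sum_of_subproblems_general (V : Type) (t : ℕ)
    (D : V → V → Prop) (M1 M2 : Set V) (hcov : M1 ∪ M2 = Set.univ) :
    beta2 V t D M1 M2 ≤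
      beta1 ↥(M1 \ M2) t (fun a b => D a.1 b.1) +
        beta1 ↥(M2 \ M1) t (fun a b => D a.1 b.1) +
        beta1 ↥(M1 ∩ M2) t (fun a b => D a.1 b.1) := by
  rw [beta2_eq_sInf_linRates2]
  rcases (linRates2 V t D M1 M2).eq_empty_or_nonempty with hB | hB
  · rw [hB, Real.sInf_empty]
    exact add_nonneg (add_nonneg (beta1_nonneg _ _ _) (beta1_nonneg _ _ _)) (beta1_nonneg _ _ _)
  have hne (A : Set V) := linRates_induce_nonempty (linRates_nonempty_of_linRates2_nonempty hB) A
  have hbdd (A : Set V) : BddBelow (linRates A t fun a b => D a b) :=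
    bddBelow_Ici.mono (linRates_subset_Ici _ _ _)
  calc sInf (linRates2 V t D M1 M2)
      ≤ sInf (linRates ↥(M1 \ M2) t (fun a b => D a.1 b.1) +
          linRates ↥(M2 \ M1) t (fun a b => D a.1 b.1) +
          linRates ↥(M1 ∩ M2) t (fun a b => D a.1 b.1)) :=
        csInf_le_csInf (bddBelow_Ici.mono (linRates2_subset_Ici V t D M1 M2))
          (((hne _).add (hne _)).add (hne _)) (add_add_subset_linRates2 hcov)
    _ = _ := by
        rw [csInf_add ((hne _).add (hne _)) ((hbdd _).add (hbdd _)) (hne _) (hbdd _),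
          csInf_add (hne _) (hbdd _) (hne _) (hbdd _)]
        rfl

/-- Trivial upper bound: concatenating optimal single-sender linear codes for the three
induced sub-problems `D₁` (messages only at sender 1), `D₂` (only at sender 2) and
`D_{1,2}` (at both) gives `β_t^l(D,P) ≤ β_t^l(D₁) + β_t^l(D₂) + β_t^l(D_{1,2})`. -/
theorem two_sender_le_sum_of_subproblems (V : Type) (t : ℕ) (ht : 1 ≤ t)
    (D : V → V → Prop) (M1 M2 : Set V) (hcov : M1 ∪ M2 = Set.univ) :
    beta2 V t D M1 M2 ≤
      beta1 ↥(M1 \ M2) t (fun a b => D a.1 b.1) +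
        beta1 ↥(M2 \ M1) t (fun a b => D a.1 b.1) +
        beta1 ↥(M1 ∩ M2) t (fun a b => D a.1 b.1) :=
  two_sender_le_sum_of_subproblems_general V t D M1 M2 hcov
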